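/- If f : ℝ → ℝ is C² and the map J ↦ f(J) is Lipschitz with constant C on the set of self-adjoint operators of norm at most R, then the map J ↦ X_f(J) satisfies a Lipschitz condition ‖X_f(J) - X_f(J')‖ ≤ L ‖J - J'‖ for all Jacobi matrices J, J' with ‖J‖, ‖J'‖ ≤ R, where L depends only on C, R, and sup_{[-R,R]} |f|. -/

import Mathlib

noncomputable section

/-- ℓ²(ℤ) -/
abbrev H2 : Type := lp (fun _ : ℤ => ℂ) 2

/-- the standard unit vectors δ_n -/
noncomputable def delta (n : ℤ) : H2 := lp.single 2 n 1

/-- matrix entries X_{jk} = ⟨δ_j, X δ_k⟩ -/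
noncomputable def ent (X : H2 →L[ℂ] H2) (j k : ℤ) : ℂ := inner ℂ (delta j) (X (delta k))

/-- the entries of the anti-symmetric part `X_a` of an operator `X` -/
noncomputable def entA (X : H2 →L[ℂ] H2) (j k : ℤ) : ℂ :=
  if j < k then ent X j k else if k < j then -ent X j k else 0

/-- `J` is a Jacobi matrix with coefficients `a`, `b`. -/
def IsJacobi (J : H2 →L[ℂ] H2) (a b : ℤ → ℝ) : Prop :=
  (∀ n, 0 < a n) ∧ (∀ j k : ℤ, ent J j k =
    if j = k then (b j : ℂ) else if k = j + 1 then (a j : ℂ)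
      else if j = k + 1 then (a k : ℂ) else 0)

/-- the `(j,k)` matrix entry of the formal commutator `F_a J - J F_a` -/
noncomputable def commEnt (F : H2 →L[ℂ] H2) (a b : ℤ → ℝ) (j k : ℤ) : ℂ :=
  (entA F j (k - 1) * (a (k - 1) : ℂ) + entA F j k * (b k : ℂ)
      + entA F j (k + 1) * (a k : ℂ))
    - ((a (j - 1) : ℂ) * entA F (j - 1) k + (b j : ℂ) * entA F j k
      + (a j : ℂ) * entA F (j + 1) k)

/-
Every entry of `X_f(J)` is a sum of six products of an entry of `f(J)_a` with a coefficient
of `J`, and all of these are bounded by the operator norms. Writing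
`xy - x'y' = (x - x')y + x'(y - y')`, the Lipschitz bound for `f` and the bound `‖f(J')‖ ≤ M`
give `|X_f(J)_{jk} - X_f(J')_{jk}| ≤ 6 (C R + M) ‖J - J'‖`.
A matrix supported on the band `|j - k| ≤ w` with entries bounded by `ε` has norm at most
`(2w + 1) ε`: pointwise, `|(Xu)_j|` is dominated by `ε` times the sum of the `2w + 1` translates
of `|u|`, each of which has the norm of `u`. With `w = 1` this gives `L = 18 (C R + M)`.
-/

open scoped ENNReal
open Finset

section Reindex

variable {α β E : Type*} [NormedAddCommGroup E] {p : ℝ≥0∞}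

theorem Memℓp.comp_equiv (hp : 0 < p.toReal) {f : α → E} (hf : Memℓp f p) (e : β ≃ α) :
    Memℓp (f ∘ e) p := by
  rw [memℓp_gen_iff hp] at hf ⊢
  exact (e.summable_iff (f := fun i => ‖f i‖ ^ p.toReal)).2 hf

def lp.compEquiv (hp : 0 < p.toReal) (f : lp (fun _ : α => E) p) (e : β ≃ α) :
    lp (fun _ : β => E) p :=
  ⟨f ∘ e, (lp.memℓp f).comp_equiv hp e⟩

@[simp]
theorem lp.compEquiv_apply (hp : 0 < p.toReal) (f : lp (fun _ : α => E) p) (e : β ≃ α)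
    (i : β) :
    lp.compEquiv hp f e i = f (e i) := rfl

theorem lp.norm_compEquiv (hp : 0 < p.toReal) (f : lp (fun _ : α => E) p) (e : β ≃ α) :
    ‖lp.compEquiv hp f e‖ = ‖f‖ := by
  rw [lp.norm_eq_tsum_rpow hp, lp.norm_eq_tsum_rpow hp]
  congr 1
  exact e.tsum_eq (fun i => ‖f i‖ ^ p.toReal)

end Reindex

theorem norm_mul_sub_mul_le {R : Type*} [NonUnitalSeminormedRing R] (x x' y y' : R) :
    ‖x * y - x' * y'‖ ≤ ‖x - x'‖ * ‖y‖ + ‖x'‖ * ‖y - y'‖ := by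
  calc ‖x * y - x' * y'‖ = ‖(x - x') * y + x' * (y - y')‖ := by noncomm_ring
    _ ≤ ‖x - x'‖ * ‖y‖ + ‖x'‖ * ‖y - y'‖ :=
      (norm_add_le _ _).trans (add_le_add (norm_mul_le _ _) (norm_mul_le _ _))

theorem inner_delta (j : ℤ) (v : H2) : inner ℂ (delta j) v = v j := by
  simp [delta, lp.inner_single_left, RCLike.inner_apply]

theorem norm_delta (n : ℤ) : ‖delta n‖ = 1 := by
  simp [delta, lp.norm_single]

theorem ent_eq_apply (X : H2 →L[ℂ] H2) (j k : ℤ) : ent X j k = X (delta k) j := by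
  rw [ent, inner_delta]

theorem ent_sub (X Y : H2 →L[ℂ] H2) (j k : ℤ) : ent (X - Y) j k = ent X j k - ent Y j k := by
  simp [ent]

theorem norm_ent_le (X : H2 →L[ℂ] H2) (j k : ℤ) : ‖ent X j k‖ ≤ ‖X‖ := by
  calc ‖ent X j k‖ ≤ ‖delta j‖ * ‖X (delta k)‖ := norm_inner_le_norm _ _
    _ ≤ ‖X‖ := by simpa [norm_delta] using X.le_opNorm (delta k)

theorem hasSum_smul_apply_delta (X : H2 →L[ℂ] H2) (u : H2) :
    HasSum (fun k => u k • X (delta k)) (X u) := by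
  have hsingle : ∀ k, lp.single 2 k (u k) = u k • delta k := fun k => by
    rw [delta, ← lp.single_smul, smul_eq_mul, mul_one]
  simpa only [hsingle, map_smul] using (lp.hasSum_single ENNReal.ofNat_ne_top u).mapL X

theorem hasSum_ent_mul_apply (X : H2 →L[ℂ] H2) (u : H2) (j : ℤ) :
    HasSum (fun k => ent X j k * u k) (X u j) := by
  have := (hasSum_smul_apply_delta X u).mapL (lp.evalCLM ℂ (fun _ : ℤ => ℂ) 2 j)
  simpa only [lp.evalCLM, LinearMap.mkContinuous_apply, lp.evalₗ_apply, lp.coeFn_smul,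
    Pi.smul_apply, smul_eq_mul, ent_eq_apply, mul_comm] using this

theorem ext_ent {X Y : H2 →L[ℂ] H2} (h : ∀ j k, ent X j k = ent Y j k) : X = Y := by
  ext u : 1
  refine lp.ext (funext fun j => (hasSum_ent_mul_apply X u j).unique ?_)
  simpa only [h] using hasSum_ent_mul_apply Y u j

theorem ent_adjoint (X : H2 →L[ℂ] H2) (j k : ℤ) :
    ent (ContinuousLinearMap.adjoint X) j k = starRingEnd ℂ (ent X k j) := by
  rw [ent, ContinuousLinearMap.adjoint_inner_right, ent, inner_conj_symm]

theorem apply_eq_sum_of_banded {X : H2 →L[ℂ] H2} {w : ℕ}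
    (hband : ∀ j k, (w : ℤ) < |j - k| → ent X j k = 0) (u : H2) (j : ℤ) :
    X u j = ∑ d ∈ Icc (-(w : ℤ)) w, ent X j (j + d) * u (j + d) := by
  have h := (Equiv.addLeft j).hasSum_iff.2 (hasSum_ent_mul_apply X u j)
  refine h.unique (hasSum_sum_of_ne_finset_zero fun d hd => ?_)
  rw [Finset.mem_Icc, ← abs_le, not_le] at hd
  simp [hband j (j + d) (by simpa using hd)]

theorem opNorm_le_of_banded {X : H2 →L[ℂ] H2} {w : ℕ} {ε : ℝ}
    (hband : ∀ j k, (w : ℤ) < |j - k| → ent X j k = 0)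
    (hent : ∀ j k, |j - k| ≤ (w : ℤ) → ‖ent X j k‖ ≤ ε) :
    ‖X‖ ≤ (2 * w + 1) * ε := by
  have hp : 0 < (2 : ℝ≥0∞).toReal := by norm_num
  have hε : 0 ≤ ε := (norm_nonneg _).trans (hent 0 0 (by simp))
  have hcard : (#(Icc (-(w : ℤ)) w) : ℝ) = 2 * w + 1 := by
    have := Int.card_Icc_of_le (-(w : ℤ)) w (by omega)
    rw [← Int.cast_natCast, this]
    push_cast
    ring
  refine X.opNorm_le_bound (by positivity) fun u => ?_
  let y : lp (fun _ : ℤ => ℝ) 2 :=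
    ε • ∑ d ∈ Icc (-(w : ℤ)) w, lp.toNorm (lp.compEquiv hp u (Equiv.addRight d))
  have hXu : ∀ j, ‖X u j‖ ≤ ‖y j‖ := fun j => calc
    ‖X u j‖ ≤ ∑ d ∈ Icc (-(w : ℤ)) w, ‖ent X j (j + d)‖ * ‖u (j + d)‖ := by
      rw [apply_eq_sum_of_banded hband]
      exact (norm_sum_le _ _).trans_eq (by simp only [norm_mul])
    _ ≤ ∑ d ∈ Icc (-(w : ℤ)) w, ε * ‖u (j + d)‖ := by
      gcongr with d hd
      exact hent _ _ (by simpa [abs_le] using hd)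
    _ = y j := by
      simp only [y, lp.coeFn_smul, lp.coeFn_sum, Pi.smul_apply, Finset.sum_apply, smul_eq_mul,
        Finset.mul_sum, lp.toNorm_coe, lp.compEquiv_apply, Equiv.coe_addRight]
    _ ≤ ‖y j‖ := Real.le_norm_self _
  calc ‖X u‖ ≤ ‖y‖ := lp.norm_mono two_ne_zero hXu
    _ ≤ ε * ∑ d ∈ Icc (-(w : ℤ)) w, ‖u‖ := by
      refine (lp.norm_const_smul_le two_ne_zero _ _).trans ?_
      rw [Real.norm_of_nonneg hε]
      gcongr
      refine (norm_sum_le _ _).trans_eq ?_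
      simp only [lp.norm_toNorm, lp.norm_compEquiv]
    _ = (2 * w + 1) * ε * ‖u‖ := by
      rw [Finset.sum_const, nsmul_eq_mul, hcard]
      ring

theorem norm_entA_le (X : H2 →L[ℂ] H2) (j k : ℤ) : ‖entA X j k‖ ≤ ‖X‖ := by
  unfold entA
  split_ifs
  · exact norm_ent_le X j k
  · rw [norm_neg]; exact norm_ent_le X j k
  · rw [norm_zero]; exact norm_nonneg X

theorem entA_sub (X Y : H2 →L[ℂ] H2) (j k : ℤ) :
    entA (X - Y) j k = entA X j k - entA Y j k := by
  simp only [entA, ent_sub]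
  split_ifs <;> ring

namespace IsJacobi

variable {J J' : H2 →L[ℂ] H2} {a b a' b' : ℤ → ℝ}

theorem ent_self (hJ : IsJacobi J a b) (n : ℤ) : ent J n n = b n := by
  simp [hJ.2]

theorem ent_succ (hJ : IsJacobi J a b) (n : ℤ) : ent J n (n + 1) = a n := by
  simp [hJ.2]

theorem isSelfAdjoint (hJ : IsJacobi J a b) : IsSelfAdjoint J := by
  rw [ContinuousLinearMap.isSelfAdjoint_iff']
  refine ext_ent fun j k => ?_
  rw [ent_adjoint, hJ.2, hJ.2]
  split_ifs <;> first | omega | (subst_vars; simp)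

theorem norm_commEnt_sub_le (hJ : IsJacobi J a b) (hJ' : IsJacobi J' a' b')
    (F F' : H2 →L[ℂ] H2) (j k : ℤ) :
    ‖commEnt F a b j k - commEnt F' a' b' j k‖ ≤
      6 * (‖F - F'‖ * ‖J‖ + ‖F'‖ * ‖J - J'‖) := by
  have hcoeff : ∀ {y y' : ℂ} (m n : ℤ), ent J m n = y → ent J' m n = y' →
      ‖y‖ ≤ ‖J‖ ∧ ‖y - y'‖ ≤ ‖J - J'‖ := by
    rintro y y' m n rfl rfl
    exact ⟨norm_ent_le J m n, ent_sub J J' m n ▸ norm_ent_le (J - J') m n⟩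
  have ha n := hcoeff n (n + 1) (hJ.ent_succ n) (hJ'.ent_succ n)
  have hb n := hcoeff n n (hJ.ent_self n) (hJ'.ent_self n)
  have hterm : ∀ p q {y y' : ℂ}, ‖y‖ ≤ ‖J‖ ∧ ‖y - y'‖ ≤ ‖J - J'‖ →
      ‖entA F p q * y - entA F' p q * y'‖ ≤
        ‖F - F'‖ * ‖J‖ + ‖F'‖ * ‖J - J'‖ := by
    rintro p q y y' ⟨hy, hyy'⟩
    refine (norm_mul_sub_mul_le _ _ _ _).trans (add_le_add ?_ ?_)
    · rw [← entA_sub]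
      exact mul_le_mul (norm_entA_le _ p q) hy (norm_nonneg _) (norm_nonneg _)
    · exact mul_le_mul (norm_entA_le F' p q) hyy' (norm_nonneg _) (norm_nonneg _)
  have hsplit : commEnt F a b j k - commEnt F' a' b' j k =
      ((entA F j (k - 1) * a (k - 1) - entA F' j (k - 1) * a' (k - 1))
        + (entA F j k * b k - entA F' j k * b' k)
        + (entA F j (k + 1) * a k - entA F' j (k + 1) * a' k))
      - ((entA F (j - 1) k * a (j - 1) - entA F' (j - 1) k * a' (j - 1))
        + (entA F j k * b j - entA F' j k * b' j)
        + (entA F (j + 1) k * a j - entA F' (j + 1) k * a' j)) := by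
    rw [commEnt, commEnt]
    ring
  rw [hsplit]
  refine (norm_sub_le _ _).trans ?_
  have h₁ := norm_add₃_le.trans (add_le_add (add_le_add (hterm j (k - 1) (ha (k - 1)))
    (hterm j k (hb k))) (hterm j (k + 1) (ha k)))
  have h₂ := norm_add₃_le.trans (add_le_add (add_le_add (hterm (j - 1) k (ha (j - 1)))
    (hterm j k (hb j))) (hterm (j + 1) k (ha j)))
  linarith

end IsJacobi

theorem stmt2_general (C R M : ℝ)
    (Φ : (H2 →L[ℂ] H2) → (H2 →L[ℂ] H2))
    (hΦlip : ∀ J J' : H2 →L[ℂ] H2, IsSelfAdjoint J → IsSelfAdjoint J' →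
      ‖J‖ ≤ R → ‖J'‖ ≤ R → ‖Φ J - Φ J'‖ ≤ C * ‖J - J'‖)
    (hΦbd : ∀ J : H2 →L[ℂ] H2, IsSelfAdjoint J → ‖J‖ ≤ R → ‖Φ J‖ ≤ M)
    (Ξ : (H2 →L[ℂ] H2) → (H2 →L[ℂ] H2))
    (hΞ : ∀ (J : H2 →L[ℂ] H2) (a b : ℤ → ℝ), IsJacobi J a b → ‖J‖ ≤ R →
      ∀ j k : ℤ, ent (Ξ J) j k =
        if |j - k| ≤ 1 then commEnt (Φ J) a b j k else 0) :
    ∃ L : ℝ, ∀ (J J' : H2 →L[ℂ] H2) (a b a' b' : ℤ → ℝ),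
      IsJacobi J a b → IsJacobi J' a' b' → ‖J‖ ≤ R → ‖J'‖ ≤ R →
      ‖Ξ J - Ξ J'‖ ≤ L * ‖J - J'‖ := by
  refine ⟨3 * (6 * (C * R + M)), fun J J' a b a' b' hJ hJ' hJR hJ'R => ?_⟩
  have hlip := hΦlip J J' hJ.isSelfAdjoint hJ'.isSelfAdjoint hJR hJ'R
  have hbd := hΦbd J' hJ'.isSelfAdjoint hJ'R
  have hent j k : ent (Ξ J - Ξ J') j k = if |j - k| ≤ 1
      then commEnt (Φ J) a b j k - commEnt (Φ J') a' b' j k else 0 := by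
    rw [ent_sub, hΞ J a b hJ hJR, hΞ J' a' b' hJ' hJ'R]
    split_ifs <;> simp
  have hnorm := opNorm_le_of_banded (X := Ξ J - Ξ J') (w := 1)
    (ε := 6 * (C * R + M) * ‖J - J'‖)
    (fun j k hjk => by rw [hent, if_neg (by exact_mod_cast hjk.not_ge)])
    (fun j k hjk => by
      rw [hent, if_pos (by exact_mod_cast hjk)]
      refine (hJ.norm_commEnt_sub_le hJ' _ _ j k).trans ?_
      have hlipR := mul_le_mul hlip hJR (norm_nonneg _) ((norm_nonneg _).trans hlip)
      have hbd' := mul_le_mul_of_nonneg_right hbd (norm_nonneg (J - J'))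
      linarith)
  calc ‖Ξ J - Ξ J'‖ ≤ (2 * (1 : ℕ) + 1) * (6 * (C * R + M) * ‖J - J'‖) := hnorm
    _ = 3 * (6 * (C * R + M)) * ‖J - J'‖ := by push_cast; ring

/-- If `f` is `C²` and the operator function `Φ : J ↦ f(J)` is Lipschitz with constant `C`
on the self-adjoint operators of norm `≤ R` (and bounded there by `M = sup_{[-R,R]}|f|`),
then the tridiagonal commutator map `Ξ : J ↦ X_f(J)` obeys a Lipschitz condition
`‖X_f(J) - X_f(J')‖ ≤ L ‖J - J'‖` on Jacobi matrices of norm `≤ R`. -/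
theorem stmt2 (f : ℝ → ℝ) (hf : ContDiff ℝ 2 f) (C R M : ℝ)
    (hM : ∀ x ∈ Set.Icc (-R) R, |f x| ≤ M)
    (Φ : (H2 →L[ℂ] H2) → (H2 →L[ℂ] H2))
    (hΦlip : ∀ J J' : H2 →L[ℂ] H2, IsSelfAdjoint J → IsSelfAdjoint J' →
      ‖J‖ ≤ R → ‖J'‖ ≤ R → ‖Φ J - Φ J'‖ ≤ C * ‖J - J'‖)
    (hΦbd : ∀ J : H2 →L[ℂ] H2, IsSelfAdjoint J → ‖J‖ ≤ R → ‖Φ J‖ ≤ M)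
    (Ξ : (H2 →L[ℂ] H2) → (H2 →L[ℂ] H2))
    (hΞ : ∀ (J : H2 →L[ℂ] H2) (a b : ℤ → ℝ), IsJacobi J a b → ‖J‖ ≤ R →
      ∀ j k : ℤ, ent (Ξ J) j k =
        if |j - k| ≤ 1 then commEnt (Φ J) a b j k else 0) :
    ∃ L : ℝ, ∀ (J J' : H2 →L[ℂ] H2) (a b a' b' : ℤ → ℝ),
      IsJacobi J a b → IsJacobi J' a' b' → ‖J‖ ≤ R → ‖J'‖ ≤ R →
      ‖Ξ J - Ξ J'‖ ≤ L * ‖J - J'‖ :=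
  stmt2_general C R M Φ hΦlip hΦbd Ξ hΞ
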